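/- arXiv:1605.02788 — 2 statements merged into one kernel-verified Lean document; each statement's English description precedes it below -/
import Mathlib

section
/- Let d ≥ 1, 1 ≤ p₀ ≤ p₂ ≤ ∞, 0 < s₀ < 1, and suppose s₀ − d/p₀ > − d/p₂ (with the convention d/∞ = 0). There is a constant C depending only on d, p₀, p₂, s₀ such that every u ∈ L^{p₀}(ℝ^d) with finite Nikolskii seminorm [u]_{s₀,p₀} belongs to L^{p₂}(ℝ^d) and satisfies ‖u‖_{L^{p₂}(ℝ^d)} ≤ C · ( ‖u‖_{L^{p₀}(ℝ^d)} + [u]_{s₀,p₀} ). -/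
/-!
Approximate `u` by its averages `A_r u` over balls of radius `r`. Averaging the translation
modulus gives, for `r' = r / 2`, both `‖A_{r'} u - A_r u‖_{p₀} ≲ [u] r^{s₀}` and the pointwise
bound `|A_{r'} u - A_r u| ≲ r^{-d/p₀} [u] r^{s₀}`; interpolating between `L^{p₀}` and `L^∞`
gives `‖A_{r'} u - A_r u‖_{p₂} ≲ [u] r^{s₀ - d/p₀ + d/p₂}`, a convergent geometric series along
`r = 2^{-j}` by the hypothesis on the exponents. The coarsest average `A_1 u` is controlled by
`‖u‖_{p₀}` in the same way, and Lebesgue's differentiation theorem with Fatou's lemma passes to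
the limit `A_{2^{-j}} u → u`.
-/

open MeasureTheory
open scoped ENNReal

/-- The Nikolskii seminorm `[u]_{γ,p} = sup_{k ≠ 0} ‖u_k − u‖_{L^p} / |k|^γ`,
valued in `ℝ≥0∞`. -/
noncomputable def nikSeminorm (d : ℕ) (γ : ℝ) (p : ℝ≥0∞)
    (u : EuclideanSpace ℝ (Fin d) → ℝ) : ℝ≥0∞ :=
  ⨆ (k : EuclideanSpace ℝ (Fin d)) (_ : k ≠ 0),
    eLpNorm (fun x => u (x + k) - u x) p volume / ENNReal.ofReal (‖k‖ ^ γ)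

open Metric Filter Set Function
open scoped Topology

theorem inv_toReal_le_inv_toReal {p q : ℝ≥0∞} (hp0 : p ≠ 0) (hpq : p ≤ q) :
    q.toReal⁻¹ ≤ p.toReal⁻¹ := by
  rcases eq_or_ne q ⊤ with rfl | hq_top
  · simp
  exact inv_anti₀ (ENNReal.toReal_pos hp0 (ne_top_of_le_ne_top hq_top hpq))
    (ENNReal.toReal_mono hq_top hpq)

section Averages

variable {ι α : Type*} [MeasurableSpace ι] [MeasurableSpace α]

theorem lintegral_rpow_enorm_eq_eLpNorm_rpow {F : Type*} [ENorm F] {μ : Measure α} {p : ℝ≥0∞}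
    (hp0 : p ≠ 0) (hp_top : p ≠ ⊤) (f : α → F) :
    ∫⁻ x, ‖f x‖ₑ ^ p.toReal ∂μ = eLpNorm f p μ ^ p.toReal := by
  rw [eLpNorm_eq_eLpNorm' hp0 hp_top,
    lintegral_rpow_enorm_eq_rpow_eLpNorm' (ENNReal.toReal_pos hp0 hp_top)]

theorem rpow_laverage_le_laverage_rpow {ν : Measure ι} [IsFiniteMeasure ν] [NeZero ν]
    {f : ι → ℝ≥0∞} (hf : AEMeasurable f ν) {q : ℝ} (hq : 1 ≤ q) :
    (⨍⁻ i, f i ∂ν) ^ q ≤ ⨍⁻ i, f i ^ q ∂ν := by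
  have hq0 : 0 < q := one_pos.trans_le hq
  have h := eLpNorm'_le_eLpNorm'_of_exponent_le one_pos hq ((ν univ)⁻¹ • ν)
    (hf.smul_measure _).aestronglyMeasurable
  simp only [eLpNorm', enorm_eq_self, ENNReal.rpow_one, div_one] at h
  rw [laverage_eq', laverage_eq']
  calc (∫⁻ i, f i ∂(ν univ)⁻¹ • ν) ^ q
      ≤ ((∫⁻ i, f i ^ q ∂(ν univ)⁻¹ • ν) ^ (1 / q)) ^ q := by gcongr
    _ = ∫⁻ i, f i ^ q ∂(ν univ)⁻¹ • ν := by
      rw [← ENNReal.rpow_mul, one_div_mul_cancel hq0.ne', ENNReal.rpow_one]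

theorem enorm_average_le_laverage {E : Type*} [NormedAddCommGroup E] [NormedSpace ℝ E]
    (ν : Measure ι) (f : ι → E) : ‖⨍ i, f i ∂ν‖ₑ ≤ ⨍⁻ i, ‖f i‖ₑ ∂ν := by
  rw [average_eq', laverage_eq']
  exact enorm_integral_le_lintegral_enorm _

theorem eLpNorm_laverage_le {μ : Measure α} [SFinite μ] {ν : Measure ι} [IsFiniteMeasure ν]
    [NeZero ν] {p : ℝ≥0∞} (hp : 1 ≤ p) (hp_top : p ≠ ⊤) {G : ι → α → ℝ≥0∞}
    (hG : Measurable (uncurry G)) {C : ℝ≥0∞} (hC : ∀ᵐ i ∂ν, eLpNorm (G i) p μ ≤ C) :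
    eLpNorm (fun x ↦ ⨍⁻ i, G i x ∂ν) p μ ≤ C := by
  have hp0 : p ≠ 0 := (one_pos.trans_le hp).ne'
  have hq : 1 ≤ p.toReal := by simpa using ENNReal.toReal_mono hp_top hp
  have hq0 : 0 < p.toReal := one_pos.trans_le hq
  rw [eLpNorm_eq_lintegral_rpow_enorm_toReal hp0 hp_top, one_div, ENNReal.rpow_inv_le_iff hq0]
  calc ∫⁻ x, ‖⨍⁻ i, G i x ∂ν‖ₑ ^ p.toReal ∂μ
      ≤ ∫⁻ x, ⨍⁻ i, G i x ^ p.toReal ∂ν ∂μ := lintegral_mono fun x ↦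
        rpow_laverage_le_laverage_rpow (hG.comp measurable_prodMk_right).aemeasurable hq
    _ = ⨍⁻ i, ∫⁻ x, G i x ^ p.toReal ∂μ ∂ν := by
      simp_rw [laverage_eq, div_eq_mul_inv]
      rw [lintegral_mul_const' _ _ (ENNReal.inv_ne_top.2 (NeZero.ne (ν univ))),
        lintegral_lintegral_swap]
      exact (hG.comp measurable_swap).pow_const _ |>.aemeasurable
    _ ≤ ⨍⁻ _, C ^ p.toReal ∂ν := laverage_mono_ae <| hC.mono fun i hi ↦ by
      simpa using (lintegral_rpow_enorm_eq_eLpNorm_rpow hp0 hp_top (G i)).trans_le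
        (ENNReal.rpow_le_rpow hi hq0.le)
    _ = C ^ p.toReal := laverage_const _ _

theorem eLpNorm_le_eLpNorm_top_rpow_mul_eLpNorm_rpow {μ : Measure α} {E : Type*}
    [NormedAddCommGroup E] {f : α → E} (hf : AEStronglyMeasurable f μ) {p q : ℝ≥0∞}
    (hp0 : p ≠ 0) (hp_top : p ≠ ⊤) (hpq : p ≤ q) :
    eLpNorm f q μ ≤
      eLpNorm f ⊤ μ ^ (1 - p.toReal / q.toReal) * eLpNorm f p μ ^ (p.toReal / q.toReal) := by
  rcases eq_or_ne q ⊤ with rfl | hq_top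
  · simp
  have hp : 0 < p.toReal := ENNReal.toReal_pos hp0 hp_top
  have hq : 0 < q.toReal := ENNReal.toReal_pos (hp0.bot_lt.trans_le hpq).ne' hq_top
  have hpq' : p.toReal ≤ q.toReal := ENNReal.toReal_mono hq_top hpq
  set S := eLpNorm f ⊤ μ
  have hpow :
      ∫⁻ x, ‖f x‖ₑ ^ q.toReal ∂μ ≤ S ^ (q.toReal - p.toReal) * eLpNorm f p μ ^ p.toReal := by
    calc ∫⁻ x, ‖f x‖ₑ ^ q.toReal ∂μ
        = ∫⁻ x, ‖f x‖ₑ ^ (q.toReal - p.toReal) * ‖f x‖ₑ ^ p.toReal ∂μ := by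
          simp_rw [← ENNReal.rpow_add_of_nonneg _ _ (sub_nonneg.2 hpq') hp.le, sub_add_cancel]
      _ ≤ ∫⁻ x, S ^ (q.toReal - p.toReal) * ‖f x‖ₑ ^ p.toReal ∂μ :=
          lintegral_mono_ae <| (enorm_ae_le_eLpNormEssSup f μ).mono fun x hx ↦ by
            rw [← eLpNorm_exponent_top] at hx; gcongr
      _ = S ^ (q.toReal - p.toReal) * eLpNorm f p μ ^ p.toReal := by
          rw [lintegral_const_mul'' _ (hf.enorm.pow_const _),
            lintegral_rpow_enorm_eq_eLpNorm_rpow hp0 hp_top]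
  rw [eLpNorm_eq_lintegral_rpow_enorm_toReal (hp0.bot_lt.trans_le hpq).ne' hq_top]
  calc (∫⁻ x, ‖f x‖ₑ ^ q.toReal ∂μ) ^ (1 / q.toReal)
      ≤ (S ^ (q.toReal - p.toReal) * eLpNorm f p μ ^ p.toReal) ^ (1 / q.toReal) := by gcongr
    _ = _ := by
      rw [ENNReal.mul_rpow_of_nonneg _ _ (by positivity), ← ENNReal.rpow_mul, ← ENNReal.rpow_mul]
      congr 2 <;> field_simp

theorem eLpNorm_le_rpow_mul_of_enorm_le {μ : Measure α} {E : Type*} [NormedAddCommGroup E]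
    {f : α → E} (hf : AEStronglyMeasurable f μ) {p q : ℝ≥0∞} (hp0 : p ≠ 0) (hp_top : p ≠ ⊤)
    (hpq : p ≤ q) {X B : ℝ≥0∞} (hX : ∀ x, ‖f x‖ₑ ≤ X ^ p.toReal⁻¹ * B)
    (hB : eLpNorm f p μ ≤ B) :
    eLpNorm f q μ ≤ X ^ (p.toReal⁻¹ - q.toReal⁻¹) * B := by
  have hθ : p.toReal / q.toReal ≤ 1 := by
    rcases eq_or_ne q ⊤ with rfl | hq_top
    · simp
    exact div_le_one_of_le₀ (ENNReal.toReal_mono hq_top hpq) ENNReal.toReal_nonneg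
  have hexp : p.toReal⁻¹ * (1 - p.toReal / q.toReal) = p.toReal⁻¹ - q.toReal⁻¹ := by
    rw [mul_sub, mul_one, mul_div_assoc', inv_mul_cancel₀ (ENNReal.toReal_pos hp0 hp_top).ne',
      one_div]
  have htop : eLpNorm f ⊤ μ ≤ X ^ p.toReal⁻¹ * B := by
    rw [eLpNorm_exponent_top]
    exact eLpNormEssSup_le_of_ae_enorm_bound (.of_forall hX)
  calc eLpNorm f q μ
      ≤ eLpNorm f ⊤ μ ^ (1 - p.toReal / q.toReal) * eLpNorm f p μ ^ (p.toReal / q.toReal) :=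
        eLpNorm_le_eLpNorm_top_rpow_mul_eLpNorm_rpow hf hp0 hp_top hpq
    _ ≤ (X ^ p.toReal⁻¹ * B) ^ (1 - p.toReal / q.toReal) * B ^ (p.toReal / q.toReal) := by
        gcongr
    _ = X ^ (p.toReal⁻¹ - q.toReal⁻¹) * B := by
        rw [ENNReal.mul_rpow_of_nonneg _ _ (by linarith), ← ENNReal.rpow_mul, hexp, mul_assoc,
          ← ENNReal.rpow_add_of_nonneg _ _ (by linarith) (by positivity), sub_add_cancel,
          ENNReal.rpow_one]

theorem eLpNorm_le_of_ae_tendsto_of_geometric {μ : Measure α} {E : Type*} [NormedAddCommGroup E]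
    {p : ℝ≥0∞} (hp : 1 ≤ p) {f : ℕ → α → E} {g : α → E}
    (hf : ∀ n, AEStronglyMeasurable (f n) μ)
    (hfg : ∀ᵐ x ∂μ, Tendsto (fun n ↦ f n x) atTop (𝓝 (g x))) {a b κ : ℝ≥0∞}
    (h0 : eLpNorm (f 0) p μ ≤ a) (hsucc : ∀ n, eLpNorm (f (n + 1) - f n) p μ ≤ b * κ ^ n) :
    eLpNorm g p μ ≤ a + b * (1 - κ)⁻¹ := by
  have hpartial : ∀ n, eLpNorm (f n) p μ ≤ a + b * ∑ j ∈ Finset.range n, κ ^ j := by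
    intro n
    induction n with
    | zero => simpa using h0
    | succ n ih =>
      calc eLpNorm (f (n + 1)) p μ = eLpNorm (f n + (f (n + 1) - f n)) p μ := by
            rw [add_sub_cancel]
        _ ≤ eLpNorm (f n) p μ + eLpNorm (f (n + 1) - f n) p μ :=
            eLpNorm_add_le (hf n) ((hf (n + 1)).sub (hf n)) hp
        _ ≤ a + b * ∑ j ∈ Finset.range n, κ ^ j + b * κ ^ n := add_le_add ih (hsucc n)
        _ = a + b * ∑ j ∈ Finset.range (n + 1), κ ^ j := by
            rw [Finset.sum_range_succ, mul_add, add_assoc]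
  refine Lp.eLpNorm_le_of_ae_tendsto (.of_forall fun n ↦ (hpartial n).trans ?_) hf hfg
  gcongr
  rw [← ENNReal.tsum_geometric]
  exact ENNReal.sum_le_tsum _

end Averages

instance isFiniteMeasure_restrict_closedBall {X : Type*} [PseudoMetricSpace X] [ProperSpace X]
    [MeasurableSpace X] {μ : Measure X} [IsFiniteMeasureOnCompacts μ] (x : X) (r : ℝ) :
    IsFiniteMeasure (μ.restrict (closedBall x r)) :=
  isFiniteMeasure_restrict.2 measure_closedBall_lt_top.ne

theorem neZero_restrict_closedBall {X : Type*} [PseudoMetricSpace X] [MeasurableSpace X]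
    {μ : Measure X} [μ.IsOpenPosMeasure] (x : X) {r : ℝ} (hr : 0 < r) :
    NeZero (μ.restrict (closedBall x r)) :=
  ⟨by simpa using (measure_closedBall_pos μ x hr).ne'⟩

-- Centred at the origin, so that the domain of integration does not depend on `x`.
noncomputable def ballAverage {E : Type*} [NormedAddCommGroup E] [MeasurableSpace E]
    (μ : Measure E) (u : E → ℝ) (r : ℝ) (x : E) : ℝ :=
  ⨍ h in closedBall (0 : E) r, u (x + h) ∂μ

theorem measurable_ballAverage {E : Type*} [NormedAddCommGroup E] [MeasurableSpace E]
    [MeasurableAdd₂ E] {μ : Measure E} [SFinite μ] {u : E → ℝ} (hu : Measurable u) (r : ℝ) :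
    Measurable (ballAverage μ u r) :=
  ((hu.comp measurable_add).stronglyMeasurable.integral_prod_right'
    (ν := (μ.restrict (closedBall 0 r) univ)⁻¹ • μ.restrict (closedBall 0 r))).measurable

section BallAverage

variable {E : Type*} [NormedAddCommGroup E] [MeasurableSpace E] [BorelSpace E] {μ : Measure E}
  [μ.IsAddHaarMeasure] {u : E → ℝ}

theorem ballAverage_eq_setAverage (r : ℝ) (x : E) :
    ballAverage μ u r x = ⨍ y in closedBall x r, u y ∂μ := by
  have hpre : (x + ·) ⁻¹' closedBall x r = closedBall 0 r := by
    rw [preimage_add_left_closedBall, neg_add_cancel]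
  rw [ballAverage, setAverage_eq, setAverage_eq, Measure.addHaar_real_closedBall_center μ x,
    ← (measurePreserving_add_left μ x).setIntegral_preimage_emb (measurableEmbedding_addLeft x) u,
    hpre]

variable [NormedSpace ℝ E] [FiniteDimensional ℝ E]

theorem ae_tendsto_ballAverage (hu : LocallyIntegrable u μ) :
    ∀ᵐ x ∂μ, Tendsto (ballAverage μ u · x) (𝓝[>] 0) (𝓝 (u x)) := by
  filter_upwards [IsUnifLocDoublingMeasure.ae_tendsto_average μ hu 1] with x hx
  simp_rw [ballAverage_eq_setAverage]
  exact hx (fun _ ↦ x) id tendsto_id <| eventually_mem_nhdsWithin.mono fun r hr ↦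
    mem_closedBall_self (by simpa using hr.le)

theorem enorm_ballAverage_sub_le (hu : LocallyIntegrable u μ) {r : ℝ} (hr : 0 < r) (x : E)
    (c : ℝ) : ‖ballAverage μ u r x - c‖ₑ ≤ ⨍⁻ h in closedBall (0 : E) r, ‖u (x + h) - c‖ₑ ∂μ := by
  have := neZero_restrict_closedBall (μ := μ) (0 : E) hr
  have hint : IntegrableOn (fun h ↦ u (x + h)) (closedBall 0 r) μ := by
    have hpre : (x + ·) ⁻¹' closedBall x r = closedBall 0 r := by
      rw [preimage_add_left_closedBall, neg_add_cancel]
    rw [← hpre]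
    exact ((measurePreserving_add_left μ x).integrableOn_comp_preimage
      (measurableEmbedding_addLeft x)).2 (hu.integrableOn_isCompact (isCompact_closedBall x r))
  calc ‖ballAverage μ u r x - c‖ₑ = ‖⨍ h in closedBall (0 : E) r, (u (x + h) - c) ∂μ‖ₑ := by
        rw [ballAverage, average_eq', average_eq',
          integral_sub hint.to_average (integrable_const c), integral_const, probReal_univ,
          one_smul]
    _ ≤ _ := enorm_average_le_laverage _ _

theorem enorm_ballAverage_sub_ballAverage_le (hu : LocallyIntegrable u μ) {r r' : ℝ}
    (hr : 0 < r) (hr' : 0 < r') (x : E) :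
    ‖ballAverage μ u r' x - ballAverage μ u r x‖ₑ ≤
      ⨍⁻ h in closedBall (0 : E) r', ⨍⁻ h' in closedBall (0 : E) r,
        ‖u (x + h) - u (x + h')‖ₑ ∂μ ∂μ := by
  refine (enorm_ballAverage_sub_le hu hr' x _).trans (laverage_mono_ae (.of_forall fun h ↦ ?_))
  dsimp only
  rw [enorm_sub_rev]
  refine (enorm_ballAverage_sub_le hu hr x _).trans_eq ?_
  simp_rw [enorm_sub_rev]

theorem eLpNorm_ballAverage_sub_ballAverage_le (hum : Measurable u) (hu : LocallyIntegrable u μ)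
    {p : ℝ≥0∞} (hp : 1 ≤ p) (hp_top : p ≠ ⊤) {r r' : ℝ} (hr : 0 < r) (hr' : 0 < r')
    {B : ℝ≥0∞} (hB : ∀ k : E, ‖k‖ ≤ r' + r → eLpNorm (fun x ↦ u (x + k) - u x) p μ ≤ B) :
    eLpNorm (ballAverage μ u r' - ballAverage μ u r) p μ ≤ B := by
  have := neZero_restrict_closedBall (μ := μ) (0 : E) hr
  have := neZero_restrict_closedBall (μ := μ) (0 : E) hr'
  refine (eLpNorm_mono_enorm fun x ↦ (enorm_ballAverage_sub_ballAverage_le hu hr hr' x).trans_eq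
    (enorm_eq_self _).symm).trans ?_
  refine eLpNorm_laverage_le hp hp_top ?_ ?_
  · simp_rw [laverage_eq]
    exact (Measurable.lintegral_prod_right'
      (f := fun z : (E × E) × E ↦ ‖u (z.1.2 + z.1.1) - u (z.1.2 + z.2)‖ₑ) (by fun_prop)).div_const _
  filter_upwards [ae_restrict_mem measurableSet_closedBall] with h hh
  refine eLpNorm_laverage_le hp hp_top (by fun_prop) ?_
  filter_upwards [ae_restrict_mem measurableSet_closedBall] with h' hh'
  rw [mem_closedBall_zero_iff] at hh hh'
  have htrans : (fun x ↦ u (x + h) - u (x + h')) =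
      (fun y ↦ u (y + (h - h')) - u y) ∘ (· + h') := by
    ext x; simp [add_assoc]
  rw [eLpNorm_enorm, htrans, eLpNorm_comp_measurePreserving (by fun_prop)
    (measurePreserving_add_right μ h')]
  exact hB _ ((norm_sub_le h h').trans (add_le_add hh hh'))

theorem eLpNorm_ballAverage_le (hum : Measurable u) (hu : LocallyIntegrable u μ) {p : ℝ≥0∞}
    (hp : 1 ≤ p) (hp_top : p ≠ ⊤) {r : ℝ} (hr : 0 < r) :
    eLpNorm (ballAverage μ u r) p μ ≤ eLpNorm u p μ := by
  have := neZero_restrict_closedBall (μ := μ) (0 : E) hr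
  refine (eLpNorm_mono_enorm fun x ↦ (by simpa using enorm_ballAverage_sub_le hu hr x 0 :
    ‖ballAverage μ u r x‖ₑ ≤ ‖⨍⁻ h in closedBall (0 : E) r, ‖u (x + h)‖ₑ ∂μ‖ₑ)).trans ?_
  refine eLpNorm_laverage_le hp hp_top (by fun_prop) (.of_forall fun h ↦ ?_)
  rw [eLpNorm_enorm]
  exact (eLpNorm_comp_measurePreserving hum.aestronglyMeasurable
    (measurePreserving_add_right μ h)).le

theorem enorm_ballAverage_le (hum : Measurable u) (hu : LocallyIntegrable u μ) {p : ℝ≥0∞}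
    (hp : 1 ≤ p) (hp_top : p ≠ ⊤) {r : ℝ} (hr : 0 < r) (x : E) :
    ‖ballAverage μ u r x‖ₑ ≤ (μ (closedBall 0 r))⁻¹ ^ p.toReal⁻¹ * eLpNorm u p μ := by
  have := neZero_restrict_closedBall (μ := μ) (0 : E) hr
  have hq : 1 ≤ p.toReal := by simpa using ENNReal.toReal_mono hp_top hp
  have hq0 : 0 < p.toReal := one_pos.trans_le hq
  have hp0 : p ≠ 0 := (one_pos.trans_le hp).ne'
  rw [← ENNReal.rpow_rpow_inv hq0.ne' (eLpNorm u p μ),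
    ← ENNReal.mul_rpow_of_nonneg _ _ (by positivity), ENNReal.le_rpow_inv_iff hq0]
  calc ‖ballAverage μ u r x‖ₑ ^ p.toReal
      ≤ (⨍⁻ h in closedBall (0 : E) r, ‖u (x + h)‖ₑ ∂μ) ^ p.toReal := by
        gcongr; simpa using enorm_ballAverage_sub_le hu hr x 0
    _ ≤ ⨍⁻ h in closedBall (0 : E) r, ‖u (x + h)‖ₑ ^ p.toReal ∂μ :=
        rpow_laverage_le_laverage_rpow (by fun_prop) hq
    _ ≤ (μ (closedBall 0 r))⁻¹ * eLpNorm u p μ ^ p.toReal := by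
        rw [setLAverage_eq, ENNReal.div_eq_inv_mul,
          ← lintegral_rpow_enorm_eq_eLpNorm_rpow hp0 hp_top,
          ← lintegral_add_left_eq_self (μ := μ) (fun y ↦ ‖u y‖ₑ ^ p.toReal) x]
        gcongr
        exact Measure.restrict_le_self

-- Substituting `h' = h + k` gives `‖k‖ ≤ r' + r`, and the `h`-integral is then bounded by the
-- full `L^p` norm of a translate difference.
theorem lintegral_lintegral_enorm_sub_rpow_le (hum : Measurable u) {p : ℝ≥0∞} (hp0 : p ≠ 0)
    (hp_top : p ≠ ⊤) {r r' : ℝ} {B : ℝ≥0∞}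
    (hB : ∀ k : E, ‖k‖ ≤ r' + r → eLpNorm (fun x ↦ u (x + k) - u x) p μ ≤ B) (x : E) :
    ∫⁻ h in closedBall (0 : E) r', ∫⁻ h' in closedBall (0 : E) r,
        ‖u (x + h) - u (x + h')‖ₑ ^ p.toReal ∂μ ∂μ ≤
      μ (closedBall 0 (r' + r)) * B ^ p.toReal := by
  set q := p.toReal
  calc ∫⁻ h in closedBall (0 : E) r', ∫⁻ h' in closedBall (0 : E) r,
        ‖u (x + h) - u (x + h')‖ₑ ^ q ∂μ ∂μ
      ≤ ∫⁻ h in closedBall (0 : E) r', ∫⁻ k in closedBall (0 : E) (r' + r),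
        ‖u (x + h + k) - u (x + h)‖ₑ ^ q ∂μ ∂μ := by
        refine setLIntegral_mono' measurableSet_closedBall fun h hh ↦ ?_
        rw [mem_closedBall_zero_iff] at hh
        have hsub : closedBall 0 r ⊆ closedBall h (r' + r) :=
          closedBall_subset_closedBall' (by rw [dist_zero_left]; linarith)
        have hpre : (h + ·) ⁻¹' closedBall h (r' + r) = closedBall 0 (r' + r) := by
          rw [preimage_add_left_closedBall, neg_add_cancel]
        refine (lintegral_mono_set hsub).trans_eq ?_
        rw [← hpre, ← (measurePreserving_add_left μ h).setLIntegral_comp_preimage_emb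
          (measurableEmbedding_addLeft h) (fun h' ↦ ‖u (x + h) - u (x + h')‖ₑ ^ q)]
        simp_rw [enorm_sub_rev, add_assoc]
    _ = ∫⁻ k in closedBall (0 : E) (r' + r), ∫⁻ h in closedBall (0 : E) r',
        ‖u (x + h + k) - u (x + h)‖ₑ ^ q ∂μ ∂μ :=
        lintegral_lintegral_swap (by fun_prop)
    _ ≤ ∫⁻ _ in closedBall (0 : E) (r' + r), B ^ q ∂μ := by
        refine setLIntegral_mono' measurableSet_closedBall fun k hk ↦ ?_
        rw [mem_closedBall_zero_iff] at hk
        calc ∫⁻ h in closedBall (0 : E) r', ‖u (x + h + k) - u (x + h)‖ₑ ^ q ∂μ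
            ≤ ∫⁻ h, ‖u (x + h + k) - u (x + h)‖ₑ ^ q ∂μ := setLIntegral_le_lintegral _ _
          _ = eLpNorm (fun y ↦ u (y + k) - u y) p μ ^ q := by
            rw [lintegral_add_left_eq_self (fun y ↦ ‖u (y + k) - u y‖ₑ ^ q) x,
              lintegral_rpow_enorm_eq_eLpNorm_rpow hp0 hp_top]
          _ ≤ B ^ q := by gcongr; exact hB k hk
    _ = μ (closedBall 0 (r' + r)) * B ^ q := by rw [setLIntegral_const, mul_comm]

theorem enorm_ballAverage_sub_ballAverage_le_rpow (hum : Measurable u)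
    (hu : LocallyIntegrable u μ) {p : ℝ≥0∞} (hp : 1 ≤ p) (hp_top : p ≠ ⊤) {r r' : ℝ}
    (hr : 0 < r) (hr' : 0 < r') {B : ℝ≥0∞}
    (hB : ∀ k : E, ‖k‖ ≤ r' + r → eLpNorm (fun x ↦ u (x + k) - u x) p μ ≤ B) (x : E) :
    ‖ballAverage μ u r' x - ballAverage μ u r x‖ₑ ≤
      ((μ (closedBall 0 r'))⁻¹ * (μ (closedBall 0 r))⁻¹ * μ (closedBall 0 (r' + r))) ^
        p.toReal⁻¹ * B := by
  have := neZero_restrict_closedBall (μ := μ) (0 : E) hr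
  have := neZero_restrict_closedBall (μ := μ) (0 : E) hr'
  have hq : 1 ≤ p.toReal := by simpa using ENNReal.toReal_mono hp_top hp
  have hq0 : 0 < p.toReal := one_pos.trans_le hq
  have hp0 : p ≠ 0 := (one_pos.trans_le hp).ne'
  set q := p.toReal
  rw [← ENNReal.rpow_rpow_inv hq0.ne' B, ← ENNReal.mul_rpow_of_nonneg _ _ (by positivity),
    ENNReal.le_rpow_inv_iff hq0]
  calc ‖ballAverage μ u r' x - ballAverage μ u r x‖ₑ ^ q
      ≤ (⨍⁻ h in closedBall (0 : E) r', ⨍⁻ h' in closedBall (0 : E) r,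
          ‖u (x + h) - u (x + h')‖ₑ ∂μ ∂μ) ^ q := by
        gcongr; exact enorm_ballAverage_sub_ballAverage_le hu hr hr' x
    _ ≤ ⨍⁻ h in closedBall (0 : E) r', (⨍⁻ h' in closedBall (0 : E) r,
          ‖u (x + h) - u (x + h')‖ₑ ∂μ) ^ q ∂μ := by
        refine rpow_laverage_le_laverage_rpow ?_ hq
        simp_rw [laverage_eq]
        exact (Measurable.lintegral_prod_right'
          (f := fun z : E × E ↦ ‖u (x + z.1) - u (x + z.2)‖ₑ) (by fun_prop)).div_const _
          |>.aemeasurable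
    _ ≤ ⨍⁻ h in closedBall (0 : E) r', ⨍⁻ h' in closedBall (0 : E) r,
          ‖u (x + h) - u (x + h')‖ₑ ^ q ∂μ ∂μ :=
        laverage_mono_ae (.of_forall fun h ↦ rpow_laverage_le_laverage_rpow (by fun_prop) hq)
    _ = (μ (closedBall 0 r'))⁻¹ * ((μ (closedBall 0 r))⁻¹ * ∫⁻ h in closedBall (0 : E) r',
          ∫⁻ h' in closedBall (0 : E) r, ‖u (x + h) - u (x + h')‖ₑ ^ q ∂μ ∂μ) := by
        simp_rw [setLAverage_eq, ENNReal.div_eq_inv_mul]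
        rw [lintegral_const_mul' _ _ (ENNReal.inv_ne_top.2 (measure_closedBall_pos μ 0 hr).ne')]
    _ ≤ _ := by
        rw [← mul_assoc, mul_assoc _ (μ _)]
        gcongr
        exact lintegral_lintegral_enorm_sub_rpow_le hum hp0 hp_top hB x

theorem eLpNorm_ballAverage_sub_ballAverage_le_interpolate (hum : Measurable u)
    (hu : LocallyIntegrable u μ) {p q : ℝ≥0∞} (hp : 1 ≤ p) (hp_top : p ≠ ⊤) (hpq : p ≤ q)
    {r r' : ℝ} (hr : 0 < r) (hr' : 0 < r') {B : ℝ≥0∞}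
    (hB : ∀ k : E, ‖k‖ ≤ r' + r → eLpNorm (fun x ↦ u (x + k) - u x) p μ ≤ B) :
    eLpNorm (ballAverage μ u r' - ballAverage μ u r) q μ ≤
      ((μ (closedBall 0 r'))⁻¹ * (μ (closedBall 0 r))⁻¹ * μ (closedBall 0 (r' + r))) ^
        (p.toReal⁻¹ - q.toReal⁻¹) * B :=
  eLpNorm_le_rpow_mul_of_enorm_le
    ((measurable_ballAverage hum r').sub (measurable_ballAverage hum r)).aestronglyMeasurable
    (one_pos.trans_le hp).ne' hp_top hpq
    (enorm_ballAverage_sub_ballAverage_le_rpow hum hu hp hp_top hr hr' hB)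
    (eLpNorm_ballAverage_sub_ballAverage_le hum hu hp hp_top hr hr' hB)

theorem eLpNorm_ballAverage_le_interpolate (hum : Measurable u) (hu : LocallyIntegrable u μ)
    {p q : ℝ≥0∞} (hp : 1 ≤ p) (hp_top : p ≠ ⊤) (hpq : p ≤ q) {r : ℝ} (hr : 0 < r) :
    eLpNorm (ballAverage μ u r) q μ ≤
      (μ (closedBall 0 r))⁻¹ ^ (p.toReal⁻¹ - q.toReal⁻¹) * eLpNorm u p μ :=
  eLpNorm_le_rpow_mul_of_enorm_le (measurable_ballAverage hum r).aestronglyMeasurable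
    (one_pos.trans_le hp).ne' hp_top hpq (enorm_ballAverage_le hum hu hp hp_top hr)
    (eLpNorm_ballAverage_le hum hu hp hp_top hr)

theorem measure_closedBall_two_inv_pow (j : ℕ) :
    μ (closedBall (0 : E) (2⁻¹ ^ j)) =
      ((2 : ℝ≥0∞) ^ Module.finrank ℝ E)⁻¹ ^ j * μ (closedBall 0 1) := by
  rw [Measure.addHaar_closedBall' μ 0 (by positivity), ← pow_mul, mul_comm j, pow_mul,
    ENNReal.ofReal_pow (by positivity), ENNReal.ofReal_pow (by positivity),
    ENNReal.ofReal_inv_of_pos two_pos, ENNReal.ofReal_ofNat, ENNReal.inv_pow]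

theorem measure_closedBall_dyadic_ratio (j : ℕ) :
    (μ (closedBall (0 : E) (2⁻¹ ^ (j + 1))))⁻¹ * (μ (closedBall (0 : E) (2⁻¹ ^ j)))⁻¹ *
      μ (closedBall (0 : E) (2⁻¹ ^ (j + 1) + 2⁻¹ ^ j)) =
      3 ^ Module.finrank ℝ E * (μ (closedBall 0 1))⁻¹ * (2 ^ Module.finrank ℝ E) ^ j := by
  set a := μ (closedBall (0 : E) (2⁻¹ ^ (j + 1)))
  have h3 : (2⁻¹ : ℝ) ^ (j + 1) + 2⁻¹ ^ j = 3 * 2⁻¹ ^ (j + 1) := by ring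
  have ha : a⁻¹ * a = 1 :=
    ENNReal.inv_mul_cancel (measure_closedBall_pos μ 0 (by positivity)).ne'
      measure_closedBall_lt_top.ne
  have hV : (μ (closedBall (0 : E) 1)) ≠ 0 := (measure_closedBall_pos μ 0 one_pos).ne'
  rw [h3, Measure.addHaar_closedBall_mul μ 0 (by norm_num) (by positivity),
    ENNReal.ofReal_pow (by norm_num), ENNReal.ofReal_ofNat, measure_closedBall_two_inv_pow,
    ENNReal.mul_inv (by simp) (by simp), ENNReal.inv_pow, inv_inv]
  calc (a⁻¹ * ((2 ^ Module.finrank ℝ E) ^ j * (μ (closedBall 0 1))⁻¹) *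
        (3 ^ Module.finrank ℝ E * a))
      = 3 ^ Module.finrank ℝ E * (μ (closedBall 0 1))⁻¹ * (2 ^ Module.finrank ℝ E) ^ j *
          (a⁻¹ * a) := by ring
    _ = _ := by rw [ha, mul_one]

theorem measure_closedBall_dyadic_ratio_rpow_mul (j : ℕ) {β : ℝ} (hβ : 0 ≤ β) (s : ℝ) :
    ((μ (closedBall (0 : E) (2⁻¹ ^ (j + 1))))⁻¹ * (μ (closedBall (0 : E) (2⁻¹ ^ j)))⁻¹ *
      μ (closedBall (0 : E) (2⁻¹ ^ (j + 1) + 2⁻¹ ^ j))) ^ β *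
        ENNReal.ofReal ((2⁻¹ ^ (j + 1) + 2⁻¹ ^ j) ^ s) =
      ((3 : ℝ≥0∞) ^ Module.finrank ℝ E * (μ (closedBall 0 1))⁻¹) ^ β *
        ENNReal.ofReal ((3 / 2) ^ s) *
        (2 ^ (Module.finrank ℝ E * β - s)) ^ j := by
  have h32 : (2⁻¹ : ℝ) ^ (j + 1) + 2⁻¹ ^ j = 3 / 2 * 2⁻¹ ^ j := by ring
  have h2 : (2 : ℝ≥0∞) ^ (Module.finrank ℝ E * β - s) =
      (2 ^ Module.finrank ℝ E) ^ β * ENNReal.ofReal (2⁻¹ ^ s) := by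
    rw [sub_eq_add_neg, ENNReal.rpow_add _ _ two_ne_zero ENNReal.ofNat_ne_top, ENNReal.rpow_mul,
      ENNReal.rpow_natCast, ← ENNReal.ofReal_rpow_of_pos (by norm_num),
      ENNReal.ofReal_inv_of_pos two_pos, ENNReal.ofReal_ofNat, ENNReal.inv_rpow, ENNReal.rpow_neg]
  have hpow : (((2 : ℝ≥0∞) ^ Module.finrank ℝ E) ^ j) ^ β =
      ((2 ^ Module.finrank ℝ E) ^ β) ^ j := by
    rw [← ENNReal.rpow_natCast, ← ENNReal.rpow_mul, mul_comm, ENNReal.rpow_mul,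
      ENNReal.rpow_natCast]
  rw [measure_closedBall_dyadic_ratio, ENNReal.mul_rpow_of_nonneg _ _ hβ, h32,
    Real.mul_rpow (by norm_num) (by positivity), ENNReal.ofReal_mul (by positivity), h2, mul_pow,
    ← Real.rpow_pow_comm (by norm_num), ENNReal.ofReal_pow (by positivity), hpow]
  ring

theorem eLpNorm_ballAverage_dyadic_sub_le (hum : Measurable u) (hu : LocallyIntegrable u μ)
    {p q : ℝ≥0∞} (hp : 1 ≤ p) (hp_top : p ≠ ⊤) (hpq : p ≤ q) {s : ℝ} (hs : 0 ≤ s) {N : ℝ≥0∞}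
    (hN : ∀ k : E, eLpNorm (fun x ↦ u (x + k) - u x) p μ ≤ N * ENNReal.ofReal (‖k‖ ^ s))
    (j : ℕ) :
    eLpNorm (ballAverage μ u (2⁻¹ ^ (j + 1)) - ballAverage μ u (2⁻¹ ^ j)) q μ ≤
      ((3 : ℝ≥0∞) ^ Module.finrank ℝ E * (μ (closedBall 0 1))⁻¹) ^ (p.toReal⁻¹ - q.toReal⁻¹) *
        ENNReal.ofReal ((3 / 2) ^ s) * N *
          (2 ^ (Module.finrank ℝ E * (p.toReal⁻¹ - q.toReal⁻¹) - s)) ^ j := by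
  have hβ : 0 ≤ p.toReal⁻¹ - q.toReal⁻¹ :=
    sub_nonneg.2 (inv_toReal_le_inv_toReal (one_pos.trans_le hp).ne' hpq)
  have h := eLpNorm_ballAverage_sub_ballAverage_le_interpolate hum hu hp hp_top hpq
    (by positivity : (0 : ℝ) < 2⁻¹ ^ j) (by positivity : (0 : ℝ) < 2⁻¹ ^ (j + 1))
    (B := N * ENNReal.ofReal ((2⁻¹ ^ (j + 1) + 2⁻¹ ^ j) ^ s)) fun k hk ↦ (hN k).trans (by gcongr)
  rw [mul_left_comm, measure_closedBall_dyadic_ratio_rpow_mul j hβ s] at h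
  exact h.trans_eq (by ring)

-- For `q = ⊤` the exponent reads `d * p.toReal⁻¹ < s`, since `(⊤ : ℝ≥0∞).toReal⁻¹ = 0`.
theorem exists_eLpNorm_le_of_eLpNorm_translate_sub_le_of_measurable {p q : ℝ≥0∞} (hp : 1 ≤ p)
    (hpq : p < q) {s : ℝ} (hs : Module.finrank ℝ E * (p.toReal⁻¹ - q.toReal⁻¹) < s) :
    ∃ C : ℝ≥0∞, C ≠ ⊤ ∧ ∀ (u : E → ℝ) (N : ℝ≥0∞), Measurable u → MemLp u p μ →
      (∀ k : E, eLpNorm (fun x ↦ u (x + k) - u x) p μ ≤ N * ENNReal.ofReal (‖k‖ ^ s)) →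
      eLpNorm u q μ ≤ C * (eLpNorm u p μ + N) := by
  set d := Module.finrank ℝ E
  set β := p.toReal⁻¹ - q.toReal⁻¹
  have hp_top : p ≠ ⊤ := hpq.ne_top
  have hβ : 0 ≤ β := sub_nonneg.2 (inv_toReal_le_inv_toReal (one_pos.trans_le hp).ne' hpq.le)
  have hs0 : 0 ≤ s := le_trans (by positivity) hs.le
  set K₁ := (μ (closedBall (0 : E) 1))⁻¹ ^ β
  set K₂ := ((3 : ℝ≥0∞) ^ d * (μ (closedBall (0 : E) 1))⁻¹) ^ β * ENNReal.ofReal ((3 / 2) ^ s)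
  set κ : ℝ≥0∞ := 2 ^ (d * β - s)
  have hκ : κ < 1 := ENNReal.rpow_lt_one_of_one_lt_of_neg (by norm_num) (by linarith)
  have hV : (μ (closedBall (0 : E) 1))⁻¹ ≠ ⊤ :=
    ENNReal.inv_ne_top.2 (measure_closedBall_pos μ 0 one_pos).ne'
  refine ⟨max K₁ (K₂ * (1 - κ)⁻¹), ?_, fun u N hum hu hN ↦ ?_⟩
  · exact max_ne_top (ENNReal.rpow_ne_top_of_nonneg hβ hV) (ENNReal.mul_ne_top
      (ENNReal.mul_ne_top (ENNReal.rpow_ne_top_of_nonneg hβ (ENNReal.mul_ne_top (by simp) hV))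
        ENNReal.ofReal_ne_top) (ENNReal.inv_ne_top.2 (tsub_pos_of_lt hκ).ne'))
  have hloc := hu.locallyIntegrable hp
  have h0 : eLpNorm (ballAverage μ u (2⁻¹ ^ 0)) q μ ≤ K₁ * eLpNorm u p μ := by
    simpa using eLpNorm_ballAverage_le_interpolate hum hloc hp hp_top hpq.le one_pos
  have hlim : ∀ᵐ x ∂μ, Tendsto (fun j : ℕ ↦ ballAverage μ u (2⁻¹ ^ j) x) atTop (𝓝 (u x)) :=
    (ae_tendsto_ballAverage hloc).mono fun x hx ↦
      hx.comp (tendsto_pow_atTop_nhdsWithin_zero_of_lt_one (by norm_num) (by norm_num))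
  calc eLpNorm u q μ ≤ K₁ * eLpNorm u p μ + K₂ * N * (1 - κ)⁻¹ :=
        eLpNorm_le_of_ae_tendsto_of_geometric (hp.trans hpq.le)
          (fun j ↦ (measurable_ballAverage hum _).aestronglyMeasurable) hlim h0
          (eLpNorm_ballAverage_dyadic_sub_le hum hloc hp hp_top hpq.le hs0 hN)
    _ ≤ max K₁ (K₂ * (1 - κ)⁻¹) * (eLpNorm u p μ + N) := by
        rw [mul_add, mul_right_comm K₂]
        gcongr
        exacts [le_max_left _ _, le_max_right _ _]

theorem exists_eLpNorm_le_of_eLpNorm_translate_sub_le {p q : ℝ≥0∞} (hp : 1 ≤ p) (hpq : p < q)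
    {s : ℝ} (hs : Module.finrank ℝ E * (p.toReal⁻¹ - q.toReal⁻¹) < s) :
    ∃ C : ℝ≥0∞, C ≠ ⊤ ∧ ∀ (u : E → ℝ) (N : ℝ≥0∞), MemLp u p μ →
      (∀ k : E, eLpNorm (fun x ↦ u (x + k) - u x) p μ ≤ N * ENNReal.ofReal (‖k‖ ^ s)) →
      eLpNorm u q μ ≤ C * (eLpNorm u p μ + N) := by
  obtain ⟨C, hC, hbound⟩ := exists_eLpNorm_le_of_eLpNorm_translate_sub_le_of_measurable
    (μ := μ) hp hpq hs
  refine ⟨C, hC, fun u N hu hN ↦ ?_⟩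
  obtain ⟨v, hv, huv⟩ := hu.aemeasurable
  have htrans (k : E) : (fun x ↦ u (x + k) - u x) =ᵐ[μ] fun x ↦ v (x + k) - v x :=
    ((measurePreserving_add_right μ k).quasiMeasurePreserving.ae_eq_comp huv).sub huv
  rw [eLpNorm_congr_ae huv, eLpNorm_congr_ae huv]
  exact hbound v N hv (hu.ae_eq huv) fun k ↦ (eLpNorm_congr_ae (htrans k)).symm.le.trans (hN k)

end BallAverage

theorem eLpNorm_translate_sub_le_nikSeminorm {d : ℕ} (s : ℝ) (p : ℝ≥0∞)
    (u : EuclideanSpace ℝ (Fin d) → ℝ) (k : EuclideanSpace ℝ (Fin d)) :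
    eLpNorm (fun x ↦ u (x + k) - u x) p volume ≤
      nikSeminorm d s p u * ENNReal.ofReal (‖k‖ ^ s) := by
  rcases eq_or_ne k 0 with rfl | hk
  · simp
  have hk' : ENNReal.ofReal (‖k‖ ^ s) ≠ 0 :=
    (ENNReal.ofReal_pos.2 (Real.rpow_pos_of_pos (norm_pos_iff.2 hk) s)).ne'
  exact (ENNReal.div_le_iff hk' ENNReal.ofReal_ne_top).1 <|
    le_iSup₂ (f := fun k (_ : k ≠ 0) ↦
      eLpNorm (fun x ↦ u (x + k) - u x) p volume / ENNReal.ofReal (‖k‖ ^ s)) k hk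

theorem nikolskii_embedding_lebesgue_general
    (d : ℕ) (p₀ p₂ : ℝ≥0∞) (hp₀ : 1 ≤ p₀) (hp₀₂ : p₀ ≤ p₂)
    (s₀ : ℝ)
    (hdiff : s₀ - (d : ℝ) / p₀.toReal > -((d : ℝ) / p₂.toReal)) :
    ∃ C : ℝ, 0 < C ∧
      ∀ u : EuclideanSpace ℝ (Fin d) → ℝ,
        MemLp u p₀ volume →
        nikSeminorm d s₀ p₀ u ≠ ⊤ →
        MemLp u p₂ volume ∧
        eLpNorm u p₂ volume ≤
          ENNReal.ofReal C * (eLpNorm u p₀ volume + nikSeminorm d s₀ p₀ u) := by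
  rcases hp₀₂.eq_or_lt with rfl | hlt
  · exact ⟨1, one_pos, fun u hu _ ↦ ⟨hu, by simp⟩⟩
  have hs : Module.finrank ℝ (EuclideanSpace ℝ (Fin d)) * (p₀.toReal⁻¹ - p₂.toReal⁻¹) < s₀ := by
    rw [finrank_euclideanSpace_fin, mul_sub, ← div_eq_mul_inv, ← div_eq_mul_inv]
    linarith
  obtain ⟨C, hC, hbound⟩ := exists_eLpNorm_le_of_eLpNorm_translate_sub_le (μ := volume) hp₀ hlt hs
  refine ⟨C.toReal + 1, by positivity, fun u hu hN ↦ ?_⟩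
  have hle : eLpNorm u p₂ volume ≤
      ENNReal.ofReal (C.toReal + 1) * (eLpNorm u p₀ volume + nikSeminorm d s₀ p₀ u) := by
    refine (hbound u _ hu (eLpNorm_translate_sub_le_nikSeminorm s₀ p₀ u)).trans ?_
    gcongr
    exact (ENNReal.le_ofReal_iff_toReal_le hC (by positivity)).2 (by linarith)
  exact ⟨⟨hu.1, hle.trans_lt (by finiteness)⟩, hle⟩

/-- (Nikolskii embedding into Lebesgue spaces, strict inequality.)
If `1 ≤ p₀ ≤ p₂ ≤ ∞`, `0 < s₀ < 1` and `s₀ − d/p₀ > −d/p₂`, then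
`N^{s₀}_{p₀}(ℝ^d) ↪ L^{p₂}(ℝ^d)` with a norm bound. (Here `d/∞ = 0`; note that
`p.toReal = 0` for `p = ∞`, and real division by `0` yields `0`.) -/
theorem nikolskii_embedding_lebesgue
    (d : ℕ) (hd : 1 ≤ d) (p₀ p₂ : ℝ≥0∞) (hp₀ : 1 ≤ p₀) (hp₀₂ : p₀ ≤ p₂)
    (s₀ : ℝ) (hs₀ : 0 < s₀) (hs₀' : s₀ < 1)
    (hdiff : s₀ - (d : ℝ) / p₀.toReal > -((d : ℝ) / p₂.toReal)) :
    ∃ C : ℝ, 0 < C ∧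
      ∀ u : EuclideanSpace ℝ (Fin d) → ℝ,
        MemLp u p₀ volume →
        nikSeminorm d s₀ p₀ u ≠ ⊤ →
        MemLp u p₂ volume ∧
        eLpNorm u p₂ volume ≤
          ENNReal.ofReal C * (eLpNorm u p₀ volume + nikSeminorm d s₀ p₀ u) :=
  nikolskii_embedding_lebesgue_general d p₀ p₂ hp₀ hp₀₂ s₀ hdiff
end

section
/- Let d ≥ 2, ε > 0, and set q = max{2 + ε, d}. There is a constant C depending only on d and ε such that for every c ∈ L^q(ℝ^d), every pair of continuously differentiable functions u, v : ℝ^d → ℝ with u, v, |∇u|, |∇v| ∈ L²(ℝ^d), and every h ∈ ℝ^d, one has | ∫_{ℝ^d} c(x) · v(x) · ( u(x) − u(x + h) ) dx | ≤ C · |h| · ‖c‖_{L^q(ℝ^d)} · ( ‖v‖_{L²(ℝ^d)} + ‖ |∇v| ‖_{L²(ℝ^d)} ) · ( ‖u‖_{L²(ℝ^d)} + ‖ |∇u| ‖_{L²(ℝ^d)} ). -/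
open MeasureTheory Set Filter Module
open scoped ENNReal NNReal

/-!
Hölder's inequality with `1/q + 1/r + 1/2 = 1`, `r = 2q/(q - 2)`, bounds the integral by
`‖c‖_q ‖v‖_r ‖u - u(· + h)‖_2`. Integrating `∇u` along the segment `[x, x + h]` and using Jensen
and translation invariance gives `‖u - u(· + h)‖_2 ≤ |h| ‖∇u‖_2`. Since `q > 2` and `q ≥ d`, the
exponent `r` lies in `[2, 2d/(d - 2)]` (in `[2, ∞)` when `d = 2`), so
`‖v‖_r ≤ C (‖v‖_2 + ‖∇v‖_2)` by the Sobolev embedding.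
For compactly supported `v` this is the Gagliardo–Nirenberg–Sobolev inequality at the critical
exponent when `d ≥ 3`; when `d = 2` the `L¹` version applied to `|v|^(k+2)` raises the exponent
from `2(k + 1)` to `2(k + 2)`. Cutoffs with uniformly bounded gradients and Fatou's lemma remove
the support condition, and interpolation with `L²` reaches every intermediate exponent.
-/

theorem eLpNorm_le_eLpNorm_rpow_mul_eLpNorm_rpow {α F : Type*} [MeasurableSpace α]
    {μ : Measure α} [NormedAddCommGroup F] {f : α → F} (hf : AEStronglyMeasurable f μ)
    {p₀ p₁ r θ : ℝ} (hp₀ : 0 < p₀) (hp₁ : 0 < p₁) (hθ₀ : 0 < θ) (hθ₁ : θ < 1)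
    (hr : r⁻¹ = θ / p₀ + (1 - θ) / p₁) :
    eLpNorm f (.ofReal r) μ ≤
      eLpNorm f (.ofReal p₀) μ ^ θ * eLpNorm f (.ofReal p₁) μ ^ (1 - θ) := by
  have hθ₁' : 0 < 1 - θ := sub_pos.2 hθ₁
  have hr₀ : 0 < r := inv_pos.1 (hr ▸ by positivity)
  have hsplit : eLpNorm f (.ofReal r) μ =
      eLpNorm (fun x => ‖f x‖ ^ θ * ‖f x‖ ^ (1 - θ)) (.ofReal r) μ := by
    refine eLpNorm_congr_norm_ae (ae_of_all _ fun x => ?_)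
    rw [← Real.rpow_add_of_nonneg (norm_nonneg _) hθ₀.le hθ₁'.le, add_sub_cancel,
      Real.rpow_one, norm_norm]
  have : ENNReal.HolderTriple (.ofReal (p₀ / θ)) (.ofReal (p₁ / (1 - θ))) (.ofReal r) := by
    constructor
    rw [← ENNReal.ofReal_inv_of_pos (by positivity), ← ENNReal.ofReal_inv_of_pos (by positivity),
      ← ENNReal.ofReal_inv_of_pos hr₀, ← ENNReal.ofReal_add (by positivity) (by positivity), hr,
      inv_div, inv_div]
  have hexp : ∀ {p t : ℝ}, 0 < t → ENNReal.ofReal (p / t) * ENNReal.ofReal t = .ofReal p :=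
    fun ht => by rw [← ENNReal.ofReal_mul' ht.le, div_mul_cancel₀ _ ht.ne']
  calc eLpNorm f (.ofReal r) μ
      ≤ 1 * eLpNorm (fun x => ‖f x‖ ^ θ) (.ofReal (p₀ / θ)) μ *
          eLpNorm (fun x => ‖f x‖ ^ (1 - θ)) (.ofReal (p₁ / (1 - θ))) μ := by
        rw [hsplit]
        exact eLpNorm_le_eLpNorm_mul_eLpNorm_of_nnnorm
          (hf.norm.aemeasurable.pow_const θ).aestronglyMeasurable
          (hf.norm.aemeasurable.pow_const _).aestronglyMeasurable
          (· * ·) 1 (ae_of_all _ fun x => by simp [nnnorm_mul])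
    _ = _ := by
        rw [one_mul, eLpNorm_norm_rpow _ hθ₀, eLpNorm_norm_rpow _ hθ₁', hexp hθ₀, hexp hθ₁']

theorem eLpNorm_le_max_of_mem_Icc {α F : Type*} [MeasurableSpace α]
    {μ : Measure α} [NormedAddCommGroup F] {f : α → F} (hf : AEStronglyMeasurable f μ)
    {p₀ p₁ r : ℝ} (hp₀ : 0 < p₀) (hr : r ∈ Icc p₀ p₁) :
    eLpNorm f (.ofReal r) μ ≤ max (eLpNorm f (.ofReal p₀) μ) (eLpNorm f (.ofReal p₁) μ) := by
  obtain ⟨h₀, h₁⟩ := hr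
  obtain h₀ | rfl := h₀.lt_or_eq
  swap; · exact le_max_left _ _
  obtain h₁ | rfl := h₁.lt_or_eq
  swap; · exact le_max_right _ _
  set θ := (r⁻¹ - p₁⁻¹) / (p₀⁻¹ - p₁⁻¹)
  have hgap : 0 < p₀⁻¹ - p₁⁻¹ := sub_pos.2 (inv_strictAnti₀ hp₀ (h₀.trans h₁))
  have hθ₀ : 0 < θ := div_pos (sub_pos.2 (inv_strictAnti₀ (hp₀.trans h₀) h₁)) hgap
  have hθ₁ : θ < 1 := (div_lt_one hgap).2 (by linarith [inv_strictAnti₀ hp₀ h₀])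
  have hθr : r⁻¹ = θ / p₀ + (1 - θ) / p₁ := by
    rw [show θ / p₀ + (1 - θ) / p₁ = p₁⁻¹ + θ * (p₀⁻¹ - p₁⁻¹) by ring,
      div_mul_cancel₀ _ hgap.ne']
    ring
  set M := max (eLpNorm f (.ofReal p₀) μ) (eLpNorm f (.ofReal p₁) μ)
  calc eLpNorm f (.ofReal r) μ
      ≤ eLpNorm f (.ofReal p₀) μ ^ θ * eLpNorm f (.ofReal p₁) μ ^ (1 - θ) :=
        eLpNorm_le_eLpNorm_rpow_mul_eLpNorm_rpow hf hp₀ (hp₀.trans (h₀.trans h₁)) hθ₀ hθ₁ hθr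
    _ ≤ M ^ θ * M ^ (1 - θ) := by gcongr <;> [exact le_max_left ..; exact le_max_right ..]
    _ = M := by rw [← ENNReal.rpow_add_of_nonneg _ _ hθ₀.le (by linarith), add_sub_cancel,
        ENNReal.rpow_one]

theorem rpow_lintegral_le_lintegral_rpow {α : Type*} [MeasurableSpace α] {ν : Measure α}
    [IsProbabilityMeasure ν] {G : α → ℝ≥0∞} (hG : AEMeasurable G ν) {p : ℝ} (hp : 1 ≤ p) :
    (∫⁻ t, G t ∂ν) ^ p ≤ ∫⁻ t, G t ^ p ∂ν := by
  have h := eLpNorm'_le_eLpNorm'_of_exponent_le one_pos hp ν hG.aestronglyMeasurable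
  simp only [eLpNorm'_eq_lintegral_enorm, enorm_eq_self, ENNReal.rpow_one, div_one] at h
  calc (∫⁻ t, G t ∂ν) ^ p ≤ ((∫⁻ t, G t ^ p ∂ν) ^ (1 / p)) ^ p := by gcongr
    _ = ∫⁻ t, G t ^ p ∂ν := by
      rw [← ENNReal.rpow_mul, one_div_mul_cancel (by positivity), ENNReal.rpow_one]

theorem enorm_integral_mul_mul_le {α : Type*} [MeasurableSpace α] {μ : Measure α}
    {f g k : α → ℝ} (hf : AEStronglyMeasurable f μ) (hg : AEStronglyMeasurable g μ)
    (hk : AEStronglyMeasurable k μ) {p q r s : ℝ≥0∞} [p.HolderTriple q s]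
    [s.HolderConjugate r] :
    ‖∫ x, f x * g x * k x ∂μ‖ₑ ≤ eLpNorm f p μ * eLpNorm g q μ * eLpNorm k r μ :=
  calc ‖∫ x, f x * g x * k x ∂μ‖ₑ ≤ eLpNorm (fun x => f x * g x * k x) 1 μ := by
        rw [eLpNorm_one_eq_lintegral_enorm]; exact enorm_integral_le_lintegral_enorm _
    _ ≤ eLpNorm (f * g) s μ * eLpNorm k r μ := by
        simpa using eLpNorm_le_eLpNorm_mul_eLpNorm_of_nnnorm (hf.mul hg) hk (· * ·) 1
          (ae_of_all _ fun x => by simp [nnnorm_mul])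
    _ ≤ eLpNorm f p μ * eLpNorm g q μ * eLpNorm k r μ := by
        gcongr
        refine (eLpNorm_le_eLpNorm_mul_eLpNorm_of_nnnorm (p := p) (q := q) hf hg (· * ·) 1
          (ae_of_all _ fun x => by simp [nnnorm_mul])).trans_eq ?_
        simp

theorem holderTriple_ofReal_two_mul_div_sub_two {Q : ℝ} (hQ : 2 < Q) :
    ENNReal.HolderTriple (.ofReal Q) (.ofReal (2 * Q / (Q - 2))) 2 := by
  constructor
  rw [← ENNReal.ofReal_inv_of_pos (by linarith), ← ENNReal.ofReal_inv_of_pos (by positivity),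
    ← ENNReal.ofReal_add (by positivity) (by positivity), ← ENNReal.ofReal_ofNat 2,
    ← ENNReal.ofReal_inv_of_pos two_pos]
  congr 1
  field_simp
  ring

theorem enorm_sub_comp_add_le {E F : Type*} [NormedAddCommGroup E] [NormedSpace ℝ E]
    [NormedAddCommGroup F] [NormedSpace ℝ F] {u : E → F} (hu : ContDiff ℝ 1 u) (x h : E) :
    ‖u x - u (x + h)‖ₑ ≤ ‖h‖ₑ * ∫⁻ t in Icc (0 : ℝ) 1, ‖fderiv ℝ u (x + t • h)‖ₑ := by
  have hline : ContDiff ℝ 1 fun t : ℝ => u (x + t • h) := hu.comp (by fun_prop)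
  have hderiv : ∀ t : ℝ, deriv (fun t : ℝ => u (x + t • h)) t = fderiv ℝ u (x + t • h) h := by
    intro t
    have hpath : HasDerivAt (fun s : ℝ => x + s • h) h t := by
      simpa using ((hasDerivAt_id t).smul_const h).const_add x
    exact ((hu.differentiable one_ne_zero _).hasFDerivAt.comp_hasDerivAt t hpath).deriv
  calc ‖u x - u (x + h)‖ₑ = ‖u (x + (1 : ℝ) • h) - u (x + (0 : ℝ) • h)‖ₑ := by
        rw [one_smul, zero_smul, add_zero, enorm_sub_rev]
    _ ≤ ∫⁻ t in Icc (0 : ℝ) 1, ‖deriv (fun t : ℝ => u (x + t • h)) t‖ₑ :=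
        enorm_sub_le_lintegral_deriv_of_contDiffOn_Icc hline.contDiffOn zero_le_one
    _ ≤ ∫⁻ t in Icc (0 : ℝ) 1, ‖fderiv ℝ u (x + t • h)‖ₑ * ‖h‖ₑ := by
        gcongr with t
        rw [hderiv]
        exact (fderiv ℝ u (x + t • h)).le_opENorm h
    _ = ‖h‖ₑ * ∫⁻ t in Icc (0 : ℝ) 1, ‖fderiv ℝ u (x + t • h)‖ₑ := by
        rw [lintegral_mul_const' _ _ enorm_ne_top, mul_comm]

theorem eLpNorm_sub_comp_add_le {E F : Type*} [NormedAddCommGroup E] [NormedSpace ℝ E]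
    [MeasurableSpace E] [BorelSpace E] [SecondCountableTopology E]
    [NormedAddCommGroup F] [NormedSpace ℝ F] {μ : Measure E} [SFinite μ]
    [μ.IsAddRightInvariant] {u : E → F} (hu : ContDiff ℝ 1 u) (h : E) {p : ℝ≥0∞}
    (hp : 1 ≤ p) (hp_top : p ≠ ∞) :
    eLpNorm (fun x => u x - u (x + h)) p μ ≤
      ‖h‖ₑ * eLpNorm (fun x => ‖fderiv ℝ u x‖) p μ := by
  set P := p.toReal
  have hP : 1 ≤ P := by simpa using ENNReal.toReal_mono hp_top hp
  have hP₀ : 0 < P := one_pos.trans_le hP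
  set g : E → ℝ≥0∞ := fun x => ‖fderiv ℝ u x‖ₑ
  have : IsProbabilityMeasure (volume.restrict (Icc (0 : ℝ) 1)) := ⟨by simp⟩
  have key : ∫⁻ x, ‖u x - u (x + h)‖ₑ ^ P ∂μ ≤ ‖h‖ₑ ^ P * ∫⁻ x, g x ^ P ∂μ :=
    calc ∫⁻ x, ‖u x - u (x + h)‖ₑ ^ P ∂μ
        ≤ ∫⁻ x, ‖h‖ₑ ^ P * (∫⁻ t in Icc (0 : ℝ) 1, g (x + t • h) ^ P) ∂μ := by
          refine lintegral_mono fun x => ?_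
          grw [enorm_sub_comp_add_le hu x h, ENNReal.mul_rpow_of_nonneg _ _ hP₀.le,
            rpow_lintegral_le_lintegral_rpow (by fun_prop) hP]
      _ = ‖h‖ₑ ^ P * ∫⁻ t in Icc (0 : ℝ) 1, (∫⁻ x, g (x + t • h) ^ P ∂μ) := by
          rw [lintegral_const_mul _ (by fun_prop), lintegral_lintegral_swap (by fun_prop)]
      _ = ‖h‖ₑ ^ P * ∫⁻ x, g x ^ P ∂μ := by
          simp [lintegral_add_right_eq_self (fun y => g y ^ P)]
  rw [eLpNorm_eq_lintegral_rpow_enorm_toReal (by positivity) hp_top,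
    eLpNorm_eq_lintegral_rpow_enorm_toReal (by positivity) hp_top]
  calc (∫⁻ x, ‖u x - u (x + h)‖ₑ ^ P ∂μ) ^ (1 / P)
      ≤ (‖h‖ₑ ^ P * ∫⁻ x, g x ^ P ∂μ) ^ (1 / P) := by gcongr
    _ = ‖h‖ₑ * (∫⁻ x, ‖‖fderiv ℝ u x‖‖ₑ ^ P ∂μ) ^ (1 / P) := by
        rw [ENNReal.mul_rpow_of_nonneg _ _ (by positivity), ← ENNReal.rpow_mul,
          mul_one_div_cancel hP₀.ne', ENNReal.rpow_one]
        simp [g]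

section Sobolev

variable {E : Type*} [NormedAddCommGroup E] [NormedSpace ℝ E]

variable (E) in
theorem exists_cutoff_fderiv_le [FiniteDimensional ℝ E] :
    ∃ K : ℝ≥0, ∀ n : ℕ, ∃ χ : E → ℝ, ContDiff ℝ 1 χ ∧ HasCompactSupport χ ∧
      (∀ x, ‖x‖ ≤ n → χ x = 1) ∧ (∀ x, ‖χ x‖ ≤ 1) ∧ ∀ x, ‖fderiv ℝ χ x‖₊ ≤ K := by
  let φ : ContDiffBump (0 : E) := ⟨1, 2, one_pos, one_lt_two⟩
  obtain ⟨K, hK⟩ := (φ.contDiff.continuous_fderiv one_ne_zero).bounded_above_of_compact_support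
    (φ.hasCompactSupport.fderiv (𝕜 := ℝ))
  refine ⟨K.toNNReal, fun n => ⟨fun x => φ (((n : ℝ) + 1)⁻¹ • x),
    φ.contDiff.comp (contDiff_const_smul (𝕜 := ℝ) _), φ.hasCompactSupport.comp_smul (by positivity),
    fun x hx => ?_, fun x => ?_, fun x => ?_⟩⟩
  · refine φ.one_of_mem_closedBall (mem_closedBall_zero_iff.2 ?_)
    rw [norm_smul, norm_inv, Real.norm_of_nonneg (by positivity), inv_mul_le_one₀ (by positivity)]
    linarith
  · rw [Real.norm_of_nonneg φ.nonneg]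
    exact φ.le_one
  · rw [← NNReal.coe_le_coe, coe_nnnorm, fderiv_comp_smul, norm_smul, norm_inv,
      Real.norm_of_nonneg (by positivity : (0 : ℝ) ≤ (n : ℝ) + 1), Real.coe_toNNReal']
    calc ((n : ℝ) + 1)⁻¹ * ‖fderiv ℝ φ (((n : ℝ) + 1)⁻¹ • x)‖ ≤ 1 * K := by
          gcongr
          · exact inv_le_one_of_one_le₀ (by linarith [n.cast_nonneg (α := ℝ)])
          · exact hK _
      _ ≤ max K 0 := by rw [one_mul]; exact le_max_left _ _

variable [MeasurableSpace E]

noncomputable def h1Norm (μ : Measure E) (w : E → ℝ) : ℝ≥0∞ :=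
  eLpNorm w 2 μ + eLpNorm (fun x => ‖fderiv ℝ w x‖) 2 μ

theorem h1Norm_ne_top {μ : Measure E} {w : E → ℝ} (hw : MemLp w 2 μ)
    (hw' : MemLp (fun x => ‖fderiv ℝ w x‖) 2 μ) : h1Norm μ w ≠ ∞ :=
  ENNReal.add_ne_top.2 ⟨hw.eLpNorm_ne_top, hw'.eLpNorm_ne_top⟩

theorem toReal_h1Norm {μ : Measure E} {w : E → ℝ} (hw : MemLp w 2 μ)
    (hw' : MemLp (fun x => ‖fderiv ℝ w x‖) 2 μ) :
    (h1Norm μ w).toReal =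
      (eLpNorm w 2 μ).toReal + (eLpNorm (fun x => ‖fderiv ℝ w x‖) 2 μ).toReal :=
  ENNReal.toReal_add hw.eLpNorm_ne_top hw'.eLpNorm_ne_top

variable [BorelSpace E] (μ : Measure E)

theorem h1Norm_mul_le {χ v : E → ℝ} (hχ : ContDiff ℝ 1 χ)
    (hv : ContDiff ℝ 1 v) (hχ_le : ∀ x, ‖χ x‖ ≤ 1) {K : ℝ≥0}
    (hK : ∀ x, ‖fderiv ℝ χ x‖₊ ≤ K) :
    h1Norm μ (fun x => χ x * v x) ≤ (1 + K) * h1Norm μ v := by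
  set A := eLpNorm v 2 μ
  set B := eLpNorm (fun x => ‖fderiv ℝ v x‖) 2 μ
  have hA : eLpNorm (fun x => χ x * v x) 2 μ ≤ A :=
    eLpNorm_mono fun x => by
      rw [norm_mul]; exact mul_le_of_le_one_left (norm_nonneg _) (hχ_le x)
  have hderiv : ∀ x, ‖fderiv ℝ (fun x => χ x * v x) x‖ ≤ ‖fderiv ℝ v x‖ + K * ‖v x‖ := by
    intro x
    rw [fderiv_fun_mul (hχ.differentiable one_ne_zero x) (hv.differentiable one_ne_zero x)]
    refine (norm_add_le _ _).trans (add_le_add ?_ ?_)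
    · rw [norm_smul]; exact mul_le_of_le_one_left (norm_nonneg _) (hχ_le x)
    · rw [norm_smul, mul_comm]; gcongr; exact hK x
  have hB : eLpNorm (fun x => ‖fderiv ℝ (fun x => χ x * v x) x‖) 2 μ ≤ B + K * A :=
    calc eLpNorm (fun x => ‖fderiv ℝ (fun x => χ x * v x) x‖) 2 μ
        ≤ eLpNorm ((fun x => ‖fderiv ℝ v x‖) + (fun x => (K : ℝ) * ‖v x‖)) 2 μ :=
          eLpNorm_mono_real fun x => by
            rw [norm_norm]; exact hderiv x
      _ ≤ B + eLpNorm (fun x => (K : ℝ) * ‖v x‖) 2 μ :=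
          eLpNorm_add_le (hv.continuous_fderiv one_ne_zero).norm.aestronglyMeasurable
            (continuous_const.mul hv.continuous.norm).aestronglyMeasurable one_le_two
      _ ≤ B + K * A := by
          gcongr
          calc eLpNorm (fun x => (K : ℝ) * ‖v x‖) 2 μ
              = eLpNorm ((K : ℝ) • fun x => ‖v x‖) 2 μ := rfl
            _ ≤ ‖(K : ℝ)‖ₑ * eLpNorm (fun x => ‖v x‖) 2 μ := eLpNorm_const_smul_le
            _ = K * A := by rw [eLpNorm_norm]; simp [A]
  calc h1Norm μ (fun x => χ x * v x) ≤ A + (B + K * A) := add_le_add hA hB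
    _ ≤ (1 + K) * (A + B) := by
        rw [show (1 + (K : ℝ≥0∞)) * (A + B) = A + (B + K * A) + K * B by ring]
        exact le_self_add

variable [FiniteDimensional ℝ E]

theorem exists_eLpNorm_le_mul_h1Norm_of_forall_hasCompactSupport {p : ℝ≥0∞} {C : ℝ≥0}
    (hC : ∀ w : E → ℝ, ContDiff ℝ 1 w → HasCompactSupport w → eLpNorm w p μ ≤ C * h1Norm μ w) :
    ∃ C' : ℝ≥0, ∀ v : E → ℝ, ContDiff ℝ 1 v → eLpNorm v p μ ≤ C' * h1Norm μ v := by
  obtain ⟨K, hK⟩ := exists_cutoff_fderiv_le E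
  choose χ hχ hχ_supp hχ_one hχ_le hχ_deriv using hK
  refine ⟨C * (1 + K), fun v hv => ?_⟩
  refine Lp.eLpNorm_le_of_ae_tendsto (u := atTop) (f := fun n x => χ n x * v x)
    (Eventually.of_forall fun n => ?_)
    (fun n => ((hχ n).continuous.mul hv.continuous).aestronglyMeasurable)
    (ae_of_all _ fun x => tendsto_const_nhds.congr' ?_)
  · calc eLpNorm (fun x => χ n x * v x) p μ ≤ C * h1Norm μ (fun x => χ n x * v x) :=
          hC _ ((hχ n).mul hv) (hχ_supp n).mul_right
      _ ≤ C * ((1 + K) * h1Norm μ v) := by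
          gcongr; exact h1Norm_mul_le μ (hχ n) hv (hχ_le n) (hχ_deriv n)
      _ = ↑(C * (1 + K)) * h1Norm μ v := by push_cast; ring
  · filter_upwards [eventually_ge_atTop ⌈‖x‖⌉₊] with n hn
    rw [hχ_one n x ((Nat.le_ceil _).trans (by exact_mod_cast hn)), one_mul]

variable [μ.IsAddHaarMeasure]

theorem exists_forall_hasCompactSupport_eLpNorm_le_of_three_le_finrank (hE : 3 ≤ finrank ℝ E) :
    ∃ C : ℝ≥0, ∀ w : E → ℝ, ContDiff ℝ 1 w → HasCompactSupport w →
      eLpNorm w (.ofReal (2 * finrank ℝ E / (finrank ℝ E - 2))) μ ≤ C * h1Norm μ w := by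
  have hn : (3 : ℝ) ≤ finrank ℝ E := by exact_mod_cast hE
  refine ⟨SNormLESNormFDerivOfEqConst ℝ μ 2, fun w hw h2w => ?_⟩
  have hexp : ((2 * finrank ℝ E / (finrank ℝ E - 2) : ℝ).toNNReal : ℝ)⁻¹ =
      (2 : ℝ≥0)⁻¹ - (finrank ℝ E : ℝ)⁻¹ := by
    rw [Real.coe_toNNReal _ (div_nonneg (by positivity) (by linarith))]
    push_cast
    field_simp
  calc eLpNorm w (.ofReal (2 * finrank ℝ E / (finrank ℝ E - 2))) μ
      ≤ SNormLESNormFDerivOfEqConst ℝ μ 2 * eLpNorm (fderiv ℝ w) (2 : ℝ≥0) μ :=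
        eLpNorm_le_eLpNorm_fderiv_of_eq μ hw h2w one_le_two (by omega) hexp
    _ ≤ SNormLESNormFDerivOfEqConst ℝ μ 2 * h1Norm μ w := by
        rw [← eLpNorm_norm (fderiv ℝ w)]
        exact mul_le_mul_right le_add_self _

theorem eLpNorm_rpow_le_of_hasCompactSupport {p : ℝ≥0}
    (hp : (finrank ℝ E : ℝ≥0).HolderConjugate p) {γ : ℝ} (hγ : 1 < γ) {w : E → ℝ}
    (hw : ContDiff ℝ 1 w) (h2w : HasCompactSupport w) :
    eLpNorm w (p * .ofReal γ) μ ^ γ ≤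
      eLpNormLESNormFDerivOneConst μ p * .ofReal γ *
        eLpNorm w (2 * .ofReal (γ - 1)) μ ^ (γ - 1) *
          eLpNorm (fun x => ‖fderiv ℝ w x‖) 2 μ := by
  have hwc := hw.continuous
  have hw' := hw.continuous_fderiv one_ne_zero
  calc eLpNorm w (p * .ofReal γ) μ ^ γ
      = eLpNorm (fun x => ‖w x‖ ^ γ) p μ := (eLpNorm_norm_rpow w (by linarith)).symm
    _ ≤ eLpNormLESNormFDerivOneConst μ p * eLpNorm (fderiv ℝ fun x => ‖w x‖ ^ γ) 1 μ :=
        eLpNorm_le_eLpNorm_fderiv_one μ (hw.norm_rpow hγ) (h2w.norm.rpow_const (by linarith)) hp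
    _ ≤ eLpNormLESNormFDerivOneConst μ p *
          eLpNorm (fun x => γ * (‖w x‖ ^ (γ - 1) * ‖fderiv ℝ w x‖)) 1 μ := by
        gcongr 1
        refine eLpNorm_mono_real fun x => ?_
        rw [← mul_assoc]
        exact norm_fderiv_norm_rpow_le (hw.differentiable one_ne_zero) hγ
    _ ≤ eLpNormLESNormFDerivOneConst μ p * (γ.toNNReal *
          eLpNorm (fun x => ‖w x‖ ^ (γ - 1)) 2 μ * eLpNorm (fun x => ‖fderiv ℝ w x‖) 2 μ) := by
        gcongr 1
        refine eLpNorm_le_eLpNorm_mul_eLpNorm_of_nnnorm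
          (hwc.measurable.norm.pow_const _).aestronglyMeasurable hw'.norm.aestronglyMeasurable
          (fun a b => γ * (a * b)) _ (ae_of_all _ fun x => ?_)
        rw [← NNReal.coe_le_coe]
        simp [abs_of_pos (zero_lt_one.trans hγ), mul_assoc, (zero_lt_one.trans hγ).le]
    _ = _ := by
        rw [eLpNorm_norm_rpow w (by linarith)]
        simp only [mul_assoc]
        rfl

theorem exists_forall_hasCompactSupport_eLpNorm_le_of_finrank_eq_two (hE : finrank ℝ E = 2)
    (k : ℕ) :
    ∃ C : ℝ≥0, ∀ w : E → ℝ, ContDiff ℝ 1 w → HasCompactSupport w →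
      eLpNorm w (.ofReal (2 * (k + 1))) μ ≤ C * h1Norm μ w := by
  have hp : (finrank ℝ E : ℝ≥0).HolderConjugate 2 := by
    rw [hE]; exact_mod_cast NNReal.HolderConjugate.two_two
  induction k with
  | zero => exact ⟨1, fun w _ _ => by simp [h1Norm]⟩
  | succ k ih =>
    obtain ⟨C, hC⟩ := ih
    set γ : ℝ := k + 2
    have hγ : 1 < γ := by simp only [γ]; linarith [k.cast_nonneg (α := ℝ)]
    set D : ℝ≥0 := eLpNormLESNormFDerivOneConst μ 2 * γ.toNNReal * C ^ (γ - 1)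
    refine ⟨D ^ γ⁻¹, fun w hw h2w => ?_⟩
    set M := h1Norm μ w
    set X := eLpNorm w (.ofReal (2 * (↑(k + 1) + 1))) μ
    have hX : X ^ γ ≤ D * M ^ γ :=
      calc X ^ γ = eLpNorm w ((2 : ℝ≥0) * .ofReal γ) μ ^ γ := by
            simp only [X]
            rw [ENNReal.ofReal_mul zero_le_two, ENNReal.ofReal_ofNat]
            push_cast [γ]
            ring_nf
        _ ≤ eLpNormLESNormFDerivOneConst μ 2 * .ofReal γ *
              eLpNorm w (2 * .ofReal (γ - 1)) μ ^ (γ - 1) *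
                eLpNorm (fun x => ‖fderiv ℝ w x‖) 2 μ :=
            eLpNorm_rpow_le_of_hasCompactSupport μ hp hγ hw h2w
        _ ≤ eLpNormLESNormFDerivOneConst μ 2 * .ofReal γ * (C * M) ^ (γ - 1) * M := by
            gcongr
            · convert hC w hw h2w using 3
              rw [ENNReal.ofReal_mul zero_le_two, ENNReal.ofReal_ofNat]
              congr 2
              simp only [γ]
              ring
            · exact le_add_self
        _ = D * M ^ γ := by
            have hM : M ^ γ = M ^ (γ - 1) * M := by
              conv_lhs => rw [show γ = (γ - 1) + 1 by ring]
              rw [ENNReal.rpow_add_of_nonneg _ _ (by linarith) zero_le_one, ENNReal.rpow_one]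
            rw [hM, ENNReal.mul_rpow_of_nonneg _ _ (by linarith)]
            simp only [D, ENNReal.coe_mul, ENNReal.coe_rpow_of_nonneg _ (by linarith : 0 ≤ γ - 1),
              show ((γ.toNNReal : ℝ≥0) : ℝ≥0∞) = .ofReal γ from rfl]
            ring
    calc X = (X ^ γ) ^ γ⁻¹ := by
          rw [← ENNReal.rpow_mul, mul_inv_cancel₀ (by positivity), ENNReal.rpow_one]
      _ ≤ (D * M ^ γ) ^ γ⁻¹ := by gcongr
      _ = ↑(D ^ γ⁻¹) * M := by
          rw [ENNReal.mul_rpow_of_nonneg _ _ (by positivity), ← ENNReal.rpow_mul,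
            mul_inv_cancel₀ (by positivity), ENNReal.rpow_one,
            ENNReal.coe_rpow_of_nonneg _ (by positivity)]

theorem exists_eLpNorm_le_mul_h1Norm (hE : 2 ≤ finrank ℝ E) {r : ℝ} (hr : 2 ≤ r)
    (hrE : (finrank ℝ E - 2) * r ≤ 2 * finrank ℝ E) :
    ∃ C : ℝ≥0, ∀ v : E → ℝ, ContDiff ℝ 1 v → eLpNorm v (.ofReal r) μ ≤ C * h1Norm μ v := by
  obtain ⟨S, hrS, C, hC⟩ : ∃ S, r ≤ S ∧ ∃ C : ℝ≥0, ∀ w : E → ℝ, ContDiff ℝ 1 w →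
      HasCompactSupport w → eLpNorm w (.ofReal S) μ ≤ C * h1Norm μ w := by
    obtain hE | hE := hE.eq_or_lt
    · refine ⟨_, ?_, exists_forall_hasCompactSupport_eLpNorm_le_of_finrank_eq_two μ hE.symm ⌈r⌉₊⟩
      linarith [Nat.le_ceil r]
    · refine ⟨_, ?_, exists_forall_hasCompactSupport_eLpNorm_le_of_three_le_finrank μ hE⟩
      have : (2 : ℝ) < finrank ℝ E := by exact_mod_cast hE
      rw [le_div_iff₀ (by linarith), mul_comm]
      exact hrE
  obtain ⟨C', hC'⟩ := exists_eLpNorm_le_mul_h1Norm_of_forall_hasCompactSupport μ hC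
  refine ⟨max 1 C', fun v hv => ?_⟩
  calc eLpNorm v (.ofReal r) μ
      ≤ max (eLpNorm v (.ofReal 2) μ) (eLpNorm v (.ofReal S) μ) :=
        eLpNorm_le_max_of_mem_Icc hv.continuous.aestronglyMeasurable two_pos ⟨hr, hrS⟩
    _ ≤ max (1 * h1Norm μ v) (C' * h1Norm μ v) := by
        gcongr
        · simp [h1Norm]
        · exact hC' v hv
    _ = ↑(max 1 C') * h1Norm μ v := by
        rw [ENNReal.coe_max, ENNReal.coe_one, max_mul_of_nonneg _ _ zero_le]

theorem exists_enorm_integral_mul_mul_sub_comp_add_le (hE : 2 ≤ finrank ℝ E) {Q : ℝ}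
    (hQ : 2 < Q) (hQE : finrank ℝ E ≤ Q) :
    ∃ C : ℝ≥0, ∀ c u v : E → ℝ, AEStronglyMeasurable c μ → ContDiff ℝ 1 u → ContDiff ℝ 1 v →
      ∀ h : E, ‖∫ x, c x * v x * (u x - u (x + h)) ∂μ‖ₑ ≤
        C * ‖h‖ₑ * eLpNorm c (.ofReal Q) μ * h1Norm μ v * h1Norm μ u := by
  have hR : 2 ≤ 2 * Q / (Q - 2) := by rw [le_div_iff₀ (by linarith)]; linarith
  have hRE : (finrank ℝ E - 2) * (2 * Q / (Q - 2)) ≤ 2 * finrank ℝ E := by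
    rw [mul_div_assoc', div_le_iff₀ (by linarith)]
    nlinarith
  obtain ⟨C, hC⟩ := exists_eLpNorm_le_mul_h1Norm μ hE hR hRE
  have := holderTriple_ofReal_two_mul_div_sub_two hQ
  refine ⟨C, fun c u v hc hu hv h => ?_⟩
  calc ‖∫ x, c x * v x * (u x - u (x + h)) ∂μ‖ₑ
      ≤ eLpNorm c (.ofReal Q) μ * eLpNorm v (.ofReal (2 * Q / (Q - 2))) μ *
          eLpNorm (fun x => u x - u (x + h)) 2 μ :=
        enorm_integral_mul_mul_le (s := 2) hc hv.continuous.aestronglyMeasurable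
          (hu.continuous.sub (hu.continuous.comp (continuous_add_const h))).aestronglyMeasurable
    _ ≤ eLpNorm c (.ofReal Q) μ * (C * h1Norm μ v) * (‖h‖ₑ * h1Norm μ u) := by
        gcongr
        · exact hC v hv
        · exact (eLpNorm_sub_comp_add_le hu h one_le_two ENNReal.ofNat_ne_top).trans
            (by gcongr; exact le_add_self)
    _ = C * ‖h‖ₑ * eLpNorm c (.ofReal Q) μ * h1Norm μ v * h1Norm μ u := by ring

end Sobolev

/-- For `d ≥ 2`, `ε > 0` and `q = max{2+ε, d}`, there is
`C = C(d, ε)` such that for every `c ∈ L^q(ℝ^d)`, all `C¹` functions `u, v` with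
`u, v, |∇u|, |∇v| ∈ L²`, and every `h`,
`|∫ c v (u − u_h)| ≤ C |h| ‖c‖_{L^q} (‖v‖_{L²} + ‖|∇v|‖_{L²}) (‖u‖_{L²} + ‖|∇u|‖_{L²})`. -/
theorem potential_form_lipschitz_estimate
    (d : ℕ) (hd : 2 ≤ d) (ε : ℝ) (hε : 0 < ε)
    (q : ℝ≥0∞) (hq : q = ENNReal.ofReal (max (2 + ε) (d : ℝ))) :
    ∃ C : ℝ, 0 < C ∧
      ∀ (c : EuclideanSpace ℝ (Fin d) → ℝ),
        MemLp c q volume →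
        ∀ u v : EuclideanSpace ℝ (Fin d) → ℝ,
          ContDiff ℝ 1 u → ContDiff ℝ 1 v →
          MemLp u 2 volume → MemLp v 2 volume →
          MemLp (fun x => ‖fderiv ℝ u x‖) 2 volume →
          MemLp (fun x => ‖fderiv ℝ v x‖) 2 volume →
          ∀ h : EuclideanSpace ℝ (Fin d),
            |∫ x, c x * v x * (u x - u (x + h))| ≤
              C * ‖h‖ * (eLpNorm c q volume).toReal *
                ((eLpNorm v 2 volume).toReal +
                  (eLpNorm (fun x => ‖fderiv ℝ v x‖) 2 volume).toReal) *
                ((eLpNorm u 2 volume).toReal +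
                  (eLpNorm (fun x => ‖fderiv ℝ u x‖) 2 volume).toReal) := by
  obtain ⟨C, hC⟩ := exists_enorm_integral_mul_mul_sub_comp_add_le
    (volume : Measure (EuclideanSpace ℝ (Fin d))) (by simpa using hd) (Q := max (2 + ε) d)
    (lt_max_of_lt_left (by linarith)) (by simp)
  rw [← hq] at hC
  refine ⟨C + 1, by positivity, fun c hc u v hu hv hu2 hv2 huB hvB h => ?_⟩
  have hfin : ↑C * ‖h‖ₑ * eLpNorm c q volume * h1Norm volume v * h1Norm volume u ≠ ∞ := by
    finiteness [hc.eLpNorm_ne_top, h1Norm_ne_top hv2 hvB, h1Norm_ne_top hu2 huB]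
  calc |∫ x, c x * v x * (u x - u (x + h))| = ‖∫ x, c x * v x * (u x - u (x + h))‖ₑ.toReal := by
        simp
    _ ≤ (↑C * ‖h‖ₑ * eLpNorm c q volume * h1Norm volume v * h1Norm volume u).toReal :=
        ENNReal.toReal_mono hfin (hC c u v hc.1 hu hv h)
    _ ≤ _ := by
        simp only [ENNReal.toReal_mul, ENNReal.coe_toReal, toReal_enorm, toReal_h1Norm hv2 hvB,
          toReal_h1Norm hu2 huB]
        gcongr
        linarith
end
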